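/- arXiv:2503.20038 — 2 statements merged into one kernel-verified Lean document; each statement's English description precedes it below -/
import Mathlib

section
/- Let η, G', g' be vectors in ℝ³ with g' ≠ 0, G' not collinear with g', and η · G' < 0. Set a = g' × (g' × G') and α = −2 (η · G')/(a · G'). Then the vector η' = η + α • a satisfies η' · g' = η · g' and η' · G' = −(η · G') > 0. -/
/-!
The vector `a = g' × (g' × G')` is orthogonal to `g'`, while `a ⬝ G' = -‖g' × G'‖²` is nonzero
exactly when `g'` and `G'` are linearly independent. Moving `η` along such a direction changes
`η ⬝ G'` without touching `η ⬝ g'`, and the step `α` is chosen so that `η ⬝ G'` flips its sign.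
-/

open Matrix

theorem cross_ne_zero_of_not_exists_eq_smul {F : Type*} [Field F] {v w : Fin 3 → F}
    (hv : v ≠ 0) (hvw : ¬ ∃ t : F, w = t • v) : v ⨯₃ w ≠ 0 := by
  rw [crossProduct_ne_zero_iff_linearIndependent, LinearIndependent.pair_iff' hv]
  exact fun t htw => hvw ⟨t, htw.symm⟩

theorem cross_cross_self_dot {R : Type*} [CommRing R] (u v : Fin 3 → R) :
    u ⨯₃ (u ⨯₃ v) ⬝ᵥ v = -(u ⨯₃ v ⬝ᵥ u ⨯₃ v) := by
  rw [dotProduct_comm, triple_product_permutation, triple_product_permutation, ← cross_anticomm u v,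
    dotProduct_neg]

theorem cross_cross_self_dot_neg {u v : Fin 3 → ℝ} (huv : u ⨯₃ v ≠ 0) :
    u ⨯₃ (u ⨯₃ v) ⬝ᵥ v < 0 := by
  rw [cross_cross_self_dot, neg_lt_zero]
  simpa using (dotProduct_star_self_pos_iff (v := u ⨯₃ v)).mpr huv

theorem dotProduct_add_smul_of_dotProduct_eq_zero {n K : Type*} [Fintype n] [CommSemiring K]
    {η a w : n → K} (c : K) (haw : a ⬝ᵥ w = 0) : (η + c • a) ⬝ᵥ w = η ⬝ᵥ w := by
  rw [add_dotProduct, smul_dotProduct, haw, smul_zero, add_zero]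

theorem dotProduct_add_reflect_smul {n K : Type*} [Fintype n] [Field K]
    {η a w : n → K} (haw : a ⬝ᵥ w ≠ 0) :
    (η + (-2 * (η ⬝ᵥ w) / (a ⬝ᵥ w)) • a) ⬝ᵥ w = -(η ⬝ᵥ w) := by
  rw [add_dotProduct, smul_dotProduct, smul_eq_mul, div_mul_cancel₀ _ haw]
  ring

theorem stmt_1 (η G' g' : Fin 3 → ℝ) (hg : g' ≠ 0)
    (hnc : ¬ ∃ t : ℝ, G' = t • g') (hη : η ⬝ᵥ G' < 0) :
    let a : Fin 3 → ℝ := crossProduct g' (crossProduct g' G')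
    let α : ℝ := -2 * (η ⬝ᵥ G') / (a ⬝ᵥ G')
    let η' : Fin 3 → ℝ := η + α • a
    η' ⬝ᵥ g' = η ⬝ᵥ g' ∧ η' ⬝ᵥ G' = -(η ⬝ᵥ G') ∧ 0 < η' ⬝ᵥ G' := by
  intro a α η'
  have haG : a ⬝ᵥ G' < 0 :=
    cross_cross_self_dot_neg (cross_ne_zero_of_not_exists_eq_smul hg hnc)
  have hflip : η' ⬝ᵥ G' = -(η ⬝ᵥ G') := dotProduct_add_reflect_smul haG.ne
  have hag : a ⬝ᵥ g' = 0 := by rw [dotProduct_comm]; exact dot_self_cross g' _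
  exact ⟨dotProduct_add_smul_of_dotProduct_eq_zero α hag, hflip, by linarith⟩
end

section
/- Let λ be a real number with 0 < λ² ≤ 1/8, and define ϖ² = (4λ² + 1 + √(1 − 8λ²))/(8λ²) or ϖ² = (4λ² + 1 − √(1 − 8λ²))/(8λ²). Then in both cases ϖ² ≥ 1 and λ² (2ϖ² − 1)² = ϖ² − 1, i.e., ϖ solves the stationary-phase equation √(ϖ² − 1)/(2ϖ² − 1) = |λ|. -/
/-! Writing `t = λ²`, the relation `t (2ϖ² - 1)² = ϖ² - 1` is the quadratic
`4t ϖ⁴ - (4t + 1) ϖ² + (t + 1) = 0` in `ϖ²`, whose discriminant is `1 - 8t`; the two values of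
`ϖ²` are exactly its roots. The relation itself forces `ϖ² - 1 ≥ 0`, hence `2ϖ² - 1 > 0`, and
taking square roots gives `√(ϖ² - 1) = |λ| (2ϖ² - 1)`. -/

theorem mul_two_mul_sub_one_sq_eq_sub_one_iff {t s : ℝ} (ht : t ≠ 0) (hd : 0 ≤ 1 - 8 * t) :
    t * (2 * s - 1) ^ 2 = s - 1 ↔
      s = (4 * t + 1 + √(1 - 8 * t)) / (8 * t) ∨ s = (4 * t + 1 - √(1 - 8 * t)) / (8 * t) := by
  have hdisc : discrim (4 * t) (-(4 * t + 1)) (t + 1) = √(1 - 8 * t) * √(1 - 8 * t) := by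
    rw [discrim, Real.mul_self_sqrt hd]; ring
  have hroots := quadratic_eq_zero_iff (mul_ne_zero four_ne_zero ht) hdisc s
  rw [neg_neg, show 2 * (4 * t) = 8 * t by ring] at hroots
  rw [← hroots]
  constructor <;> intro h <;> linarith

theorem one_le_of_sq_mul_two_mul_sub_one_sq_eq {l s : ℝ} (h : l ^ 2 * (2 * s - 1) ^ 2 = s - 1) :
    1 ≤ s := by
  nlinarith [mul_nonneg (sq_nonneg l) (sq_nonneg (2 * s - 1))]

theorem sqrt_sub_one_div_eq_abs {l s : ℝ} (h : l ^ 2 * (2 * s - 1) ^ 2 = s - 1) :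
    √(s - 1) / (2 * s - 1) = |l| := by
  have hpos : 0 < 2 * s - 1 := by linarith [one_le_of_sq_mul_two_mul_sub_one_sq_eq h]
  have hsq : s - 1 = (|l| * (2 * s - 1)) ^ 2 := by rw [mul_pow, sq_abs, h]
  rw [hsq, Real.sqrt_sq (by positivity), mul_div_cancel_right₀ _ hpos.ne']

theorem stmt_10 (l s : ℝ) (hl : 0 < l ^ 2) (hl' : l ^ 2 ≤ 1 / 8)
    (hs : s = (4 * l ^ 2 + 1 + Real.sqrt (1 - 8 * l ^ 2)) / (8 * l ^ 2) ∨
          s = (4 * l ^ 2 + 1 - Real.sqrt (1 - 8 * l ^ 2)) / (8 * l ^ 2)) :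
    1 ≤ s ∧ l ^ 2 * (2 * s - 1) ^ 2 = s - 1 ∧
      Real.sqrt (s - 1) / (2 * s - 1) = |l| := by
  have h := (mul_two_mul_sub_one_sq_eq_sub_one_iff hl.ne' (by linarith)).mpr hs
  exact ⟨one_le_of_sq_mul_two_mul_sub_one_sq_eq h, h, sqrt_sub_one_div_eq_abs h⟩
end
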